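/- arXiv:1603.04381 — 2 statements merged into one kernel-verified Lean document; each statement's English description precedes it below -/
import Mathlib

section
/- Let X ⊂ ℝ^d be a compact convex set with nonempty interior, let f : X → ℝ have a continuous induced ranking rule and (c_α, α)-regular level sets with unique global maximizer x*, and let (X_1, …, X_n) be an AdaRankOpt process for f on X with exploration parameter p ∈ (0,1) and nested ranking structures (R_k)_{k≥1}. Assume k* = min{k : r_f ∈ R_k} is finite and k* > 1, that inf_{r ∈ R_{k*−1}} L(r) > 0, and that there is K > 0 with E[R_n(R_{k*−1})] ≤ √(K/n) for all n ≥ 1. Then for every δ ∈ (0,1) and n ≥ 1, with probability at least 1−δ, ‖X_{î_n} − x*‖₂ ≤ C₁ · (11(K + ln(4/δ)) / (p · (inf_{r ∈ R_{k*−1}} L(r))²)) · (ln(2/δ)/n)^{1/(d(1+α)²)}, where C₁ = c_α^{(2+α)/(1+α)} · diam(X)^{1/(1+α)²} and î_n ∈ argmax_{1≤i≤n} f(X_i). -/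
open MeasureTheory ProbabilityTheory Set
open scoped ENNReal NNReal BigOperators

noncomputable section

/-- Euclidean space `ℝ^d`. -/
abbrev Euc (d : ℕ) := EuclideanSpace ℝ (Fin d)

/-- The uniform probability measure on a set `s` (w.r.t. the ambient volume measure). -/
def unifOn {E : Type*} [MeasureSpace E] (s : Set E) : Measure E :=
  (volume s)⁻¹ • volume.restrict s

instance unifOn.instIsFiniteMeasure {E : Type*} [MeasureSpace E] (s : Set E) :
    IsFiniteMeasure (unifOn s) := by
  constructor
  rw [unifOn, Measure.smul_apply, Measure.restrict_apply_univ, smul_eq_mul]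
  rcases eq_or_ne (volume s) 0 with h | h
  · simp [h]
  rcases eq_or_ne (volume s) ⊤ with h' | h'
  · simp [h, h']
  · rw [ENNReal.inv_mul_cancel h h']; exact ENNReal.one_lt_top

/-- `f` has a continuous induced ranking rule on `Xset`. -/
def HasContinuousRanking {d : ℕ} (Xset : Set (Euc d)) (f : Euc d → ℝ) : Prop :=
  ∃ h : Euc d → ℝ, ContinuousOn h Xset ∧
    ∀ x ∈ Xset, ∀ x' ∈ Xset, Real.sign (f x - f x') = Real.sign (h x - h x')

/-- `f` has `(c, α)`-regular level sets on `Xset` with unique global maximizer `xs`. -/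
def RegularLevelSets {d : ℕ} (Xset : Set (Euc d)) (f : Euc d → ℝ) (xs : Euc d)
    (c α : ℝ) : Prop :=
  xs ∈ Xset ∧ (∀ x ∈ Xset, f x ≤ f xs) ∧ (∀ x ∈ Xset, f x = f xs → x = xs) ∧
    ∀ x ∈ Xset, ∀ x' ∈ Xset, f x = f x' →
      dist xs x ≤ c * dist xs x' ^ ((1 : ℝ) / (1 + α))

/-- Inner radius of a set. -/
def inradius {d : ℕ} (s : Set (Euc d)) : ℝ :=
  sSup {r : ℝ | 0 < r ∧ ∃ x ∈ s, Metric.closedBall x r ⊆ s}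

/-- A RankOpt-type process: `X 0` is uniform on `Xset` and, conditionally on the history
`(X 0, …, X t)`, the point `X (t+1)` is uniform on a measurable set of positive volume squeezed
between the current upper level set and `Xset`. -/
def IsRankOptProcess {d : ℕ} {Ω : Type*} [MeasurableSpace Ω] (P : Measure Ω)
    [IsFiniteMeasure P] (Xset : Set (Euc d)) (f : Euc d → ℝ) (n : ℕ)
    (X : Fin n → Ω → Euc d) : Prop :=
  (∀ i, Measurable (X i)) ∧
  (∀ h0 : 0 < n, P.map (X ⟨0, h0⟩) = unifOn Xset) ∧
  ∀ (t : ℕ) (ht : t + 1 < n),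
    ∀ᵐ ω ∂P, ∃ A : Set (Euc d), MeasurableSet A ∧ 0 < volume A ∧
      {x ∈ Xset | ∀ i : Fin (t + 1), f (X (Fin.castLE ht.le i) ω) ≤ f x} ⊆ A ∧
      A ⊆ Xset ∧
      condDistrib (X ⟨t + 1, ht⟩)
        (fun ω' => fun i : Fin (t + 1) => X (Fin.castLE ht.le i) ω') P
        (fun i : Fin (t + 1) => X (Fin.castLE ht.le i) ω) = unifOn A

/-- A Pure Adaptive Search: `X 0` is uniform on `Xset` and, conditionally on `X t`,
the point `X (t+1)` is uniform on the upper level set of `f (X t)`. -/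
def IsPureAdaptiveSearch {d : ℕ} {Ω : Type*} [MeasurableSpace Ω] (P : Measure Ω)
    [IsFiniteMeasure P] (Xset : Set (Euc d)) (f : Euc d → ℝ) (n : ℕ)
    (X : Fin n → Ω → Euc d) : Prop :=
  (∀ i, Measurable (X i)) ∧
  (∀ h0 : 0 < n, P.map (X ⟨0, h0⟩) = unifOn Xset) ∧
  ∀ (t : ℕ) (ht : t + 1 < n),
    ∀ᵐ ω ∂P,
      condDistrib (X ⟨t + 1, ht⟩) (X ⟨t, by omega⟩) P (X ⟨t, by omega⟩ ω)
        = unifOn {x ∈ Xset | f (X (⟨t, by omega⟩ : Fin n) ω) ≤ f x}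

/-- Empirical ranking loss of a ranking rule `r` over the sample `x` with values `f ∘ x`. -/
def empLoss {d : ℕ} (f : Euc d → ℝ) {t : ℕ} (x : Fin t → Euc d)
    (r : Euc d → Euc d → ℝ) : ℝ :=
  (2 / ((t : ℝ) * ((t : ℝ) - 1))) * ∑ i : Fin t, ∑ j : Fin t,
    if i < j ∧ r (x i) (x j) ≠ Real.sign (f (x i) - f (x j)) then (1 : ℝ) else 0

/-- Index of the smallest ranking structure of the nested sequence `R` containing a ranking rule
consistent with the sample. -/
def khat {d : ℕ} (f : Euc d → ℝ) (R : ℕ → Set (Euc d → Euc d → ℝ)) {t : ℕ}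
    (x : Fin t → Euc d) : ℕ :=
  sInf {k : ℕ | 1 ≤ k ∧ ∃ r ∈ R k, empLoss f x r = 0}

/-- The exploitation sampling region of AdaRankOpt, given the history `x` and the current best
point `xb`. -/
def adaSet {d : ℕ} (Xset : Set (Euc d)) (f : Euc d → ℝ)
    (R : ℕ → Set (Euc d → Euc d → ℝ)) {t : ℕ} (x : Fin t → Euc d) (xb : Euc d) :
    Set (Euc d) :=
  {y ∈ Xset | ∃ r ∈ R (khat f R x), empLoss f x r = 0 ∧ 0 ≤ r y xb}

/-- Bernoulli measure with parameter `p` on `Bool`. -/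
def bern (p : ℝ) : Measure Bool :=
  ENNReal.ofReal p • Measure.dirac true + ENNReal.ofReal (1 - p) • Measure.dirac false

instance bern.instIsFiniteMeasure (p : ℝ) : IsFiniteMeasure (bern p) := by
  constructor
  rw [bern]
  simp only [Measure.add_apply, Measure.smul_apply, measure_univ, smul_eq_mul, mul_one]
  exact ENNReal.add_lt_top.mpr ⟨ENNReal.ofReal_lt_top, ENNReal.ofReal_lt_top⟩

/-- An AdaRankOpt process with exploration parameter `p` and ranking structures `R`. -/
def IsAdaRankOptProcess {d : ℕ} {Ω : Type*} [MeasurableSpace Ω] (P : Measure Ω)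
    [IsFiniteMeasure P] (Xset : Set (Euc d)) (f : Euc d → ℝ) (p : ℝ)
    (R : ℕ → Set (Euc d → Euc d → ℝ)) (n : ℕ) (X : Fin n → Ω → Euc d) : Prop :=
  ∃ B : Fin n → Ω → Bool,
    (∀ i, Measurable (X i)) ∧ (∀ i, Measurable (B i)) ∧
    (∀ h0 : 0 < n, P.map (X ⟨0, h0⟩) = unifOn Xset) ∧
    ∀ (t : ℕ) (ht : t + 1 < n),
      P.map (B ⟨t + 1, ht⟩) = bern p ∧
      IndepFun (B ⟨t + 1, ht⟩)
        (fun ω => ((fun i : Fin (t + 1) => X (Fin.castLE ht.le i) ω),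
                   (fun i : Fin (t + 1) => B (Fin.castLE ht.le i) ω))) P ∧
      ∃ ihat : Ω → Fin (t + 1), Measurable ihat ∧
        (∀ᵐ ω ∂P, ∀ j : Fin (t + 1),
          f (X (Fin.castLE ht.le j) ω) ≤ f (X (Fin.castLE ht.le (ihat ω)) ω)) ∧
        (∀ᵐ ω ∂P,
          condDistrib (X ⟨t + 1, ht⟩)
            (fun ω' => ((fun i : Fin (t + 1) => X (Fin.castLE ht.le i) ω'),
                        B ⟨t + 1, ht⟩ ω')) P
            ((fun i : Fin (t + 1) => X (Fin.castLE ht.le i) ω), B ⟨t + 1, ht⟩ ω)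
          = if B ⟨t + 1, ht⟩ ω then unifOn Xset
            else unifOn (adaSet Xset f R
                  (fun i : Fin (t + 1) => X (Fin.castLE ht.le i) ω)
                  (X (Fin.castLE ht.le (ihat ω)) ω)))

/-- An AdaRankOpt process indexed by all of `ℕ`. -/
def IsAdaRankOptProcessNat {d : ℕ} {Ω : Type*} [MeasurableSpace Ω] (P : Measure Ω)
    [IsFiniteMeasure P] (Xset : Set (Euc d)) (f : Euc d → ℝ) (p : ℝ)
    (R : ℕ → Set (Euc d → Euc d → ℝ)) (X : ℕ → Ω → Euc d) : Prop :=
  ∃ B : ℕ → Ω → Bool,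
    (∀ i, Measurable (X i)) ∧ (∀ i, Measurable (B i)) ∧
    P.map (X 0) = unifOn Xset ∧
    ∀ t : ℕ,
      P.map (B (t + 1)) = bern p ∧
      IndepFun (B (t + 1))
        (fun ω => ((fun i : Fin (t + 1) => X i ω),
                   (fun i : Fin (t + 1) => B i ω))) P ∧
      ∃ ihat : Ω → Fin (t + 1), Measurable ihat ∧
        (∀ᵐ ω ∂P, ∀ j : Fin (t + 1), f (X j ω) ≤ f (X (ihat ω) ω)) ∧
        (∀ᵐ ω ∂P,
          condDistrib (X (t + 1))
            (fun ω' => ((fun i : Fin (t + 1) => X i ω'), B (t + 1) ω')) P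
            ((fun i : Fin (t + 1) => X i ω), B (t + 1) ω)
          = if B (t + 1) ω then unifOn Xset
            else unifOn (adaSet Xset f R (fun i : Fin (t + 1) => X i ω)
                  (X (ihat ω) ω)))

/-- The true ranking loss `L(r) = P(r(X,X') ≠ r_f(X,X'))` for `X, X'` independent uniform on
`Xset`. -/
def trueLoss {d : ℕ} (Xset : Set (Euc d)) (f : Euc d → ℝ) (r : Euc d → Euc d → ℝ) : ℝ :=
  (((unifOn Xset).prod (unifOn Xset))
    {q : Euc d × Euc d | r q.1 q.2 ≠ Real.sign (f q.1 - f q.2)}).toReal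

/-- The random quantity whose expectation is the Rademacher average of the class `R` given the
ranking rule induced by `f`. -/
def radSupTerm {d : ℕ} (f : Euc d → ℝ) (R : Set (Euc d → Euc d → ℝ)) (n : ℕ)
    (x : Fin n → Euc d) (ε : Fin (n / 2) → Bool) : ℝ :=
  sSup {v : ℝ | ∃ r ∈ R, v =
    (1 / ((n / 2 : ℕ) : ℝ)) * |∑ i : Fin (n / 2),
      (if ε i then (1 : ℝ) else -1) *
      (if r (x ⟨i.1, by have := i.isLt; omega⟩) (x ⟨n / 2 + i.1, by have := i.isLt; omega⟩)
          ≠ Real.sign (f (x ⟨i.1, by have := i.isLt; omega⟩)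
            - f (x ⟨n / 2 + i.1, by have := i.isLt; omega⟩)) then (1 : ℝ) else 0)|}

/-- Expected Rademacher average `E[R_n(R)]` of the class `R` given `r_f`, where the sample is
i.i.d. uniform on `Xset` and the signs are i.i.d. Rademacher. -/
def expRad {d : ℕ} (Xset : Set (Euc d)) (f : Euc d → ℝ)
    (R : Set (Euc d → Euc d → ℝ)) (n : ℕ) : ℝ :=
  ∫ x, (∫ ε, radSupTerm f R n x ε ∂(Measure.pi fun _ : Fin (n / 2) => bern (1 / 2)))
    ∂(Measure.pi fun _ : Fin n => unifOn Xset)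

/-- Index type for the non-constant monomials of degree at most `k` in `d` variables. -/
def MonIdx (d k : ℕ) :=
  {a : Fin d → Fin (k + 1) // 1 ≤ ∑ i, (a i : ℕ) ∧ ∑ i, (a i : ℕ) ≤ k}

instance (d k : ℕ) : Fintype (MonIdx d k) := by unfold MonIdx; infer_instance

/-- The monomial feature `x ↦ ∏ i, x i ^ a i`, a coordinate of the polynomial feature map
`Φ_k`. -/
def monFeature {d k : ℕ} (a : MonIdx d k) (x : Fin d → ℝ) : ℝ :=
  ∏ i, x i ^ ((a.1 i : ℕ))

end

/-!
At every step `t ≥ 1` the process samples uniformly on `Xset` with probability `p`, independently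
of the past, so the probability that none of `X 1, …, X (n - 1)` falls in
`S = closedBall xs ρ ∩ Xset` is at most `(1 - p · unifOn Xset S) ^ (n - 1)`. By convexity,
`S` contains the image of `Xset` under the homothety of centre `xs` and ratio
`τ = ρ / diam Xset`, so `unifOn Xset S ≥ τ ^ d`. As soon as some `X s` lies in `S`, every
empirical maximizer `y` satisfies `f (X s) ≤ f y`; moving along the segment `[xs, X s]` (on which
the continuous ranking rule takes every intermediate value) gives a point on the level set of `y`
no farther from `xs` than `X s`, and two applications of the regularity of level sets give
`dist xs y ≤ c ^ ((2 + α) / (1 + α)) * ρ ^ (1 / (1 + α) ^ 2)`. Since the factor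
`11 (K + log (4 / δ)) / (p (inf L)²)` is at least `11 / p`, the radius matching the stated bound
makes the miss probability at most `δ`.
-/

lemma Real.sign_nonpos_iff {r : ℝ} : Real.sign r ≤ 0 ↔ r ≤ 0 := by
  rcases lt_trichotomy r 0 with h | rfl | h
  · simp [Real.sign_of_neg h, h.le]
  · simp
  · simp [Real.sign_of_pos h, h.not_ge]

lemma le_iff_le_of_sign_sub_eq {a b a' b' : ℝ} (h : Real.sign (a - b) = Real.sign (a' - b')) :
    a ≤ b ↔ a' ≤ b' := by
  rw [← sub_nonpos, ← Real.sign_nonpos_iff, h, Real.sign_nonpos_iff, sub_nonpos]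

lemma eq_iff_eq_of_sign_sub_eq {a b a' b' : ℝ} (h : Real.sign (a - b) = Real.sign (a' - b')) :
    a = b ↔ a' = b' := by
  rw [← sub_eq_zero, ← Real.sign_eq_zero_iff, h, Real.sign_eq_zero_iff, sub_eq_zero]

namespace RegularLevelSets

variable {d : ℕ} {Xset : Set (Euc d)} {f : Euc d → ℝ} {xs : Euc d} {c α : ℝ}

theorem dist_le_of_le (hreg : RegularLevelSets Xset f xs c α) (hXconv : Convex ℝ Xset)
    (hf : HasContinuousRanking Xset f) (hc : 0 ≤ c) (hα : 0 ≤ α)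
    {x y : Euc d} (hx : x ∈ Xset) (hy : y ∈ Xset) (hxy : f x ≤ f y) :
    dist xs y ≤ c * dist xs x ^ ((1 : ℝ) / (1 + α)) := by
  obtain ⟨hxs, hmax, -, hlevel⟩ := hreg
  obtain ⟨h, hcont, hsign⟩ := hf
  have hseg : MapsTo (AffineMap.lineMap xs x) (Icc (0 : ℝ) 1) Xset :=
    hXconv.mapsTo_lineMap hxs hx
  have hy_mem :
      h y ∈ Icc (h (AffineMap.lineMap xs x (1 : ℝ))) (h (AffineMap.lineMap xs x (0 : ℝ))) := by
    rw [AffineMap.lineMap_apply_one, AffineMap.lineMap_apply_zero]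
    exact ⟨(le_iff_le_of_sign_sub_eq (hsign x hx y hy)).1 hxy,
      (le_iff_le_of_sign_sub_eq (hsign y hy xs hxs)).1 (hmax y hy)⟩
  obtain ⟨t, ht, hty⟩ := intermediate_value_Icc' zero_le_one
    (hcont.comp AffineMap.lineMap_continuous.continuousOn hseg) hy_mem
  have hz := hseg ht
  have hfz : f y = f (AffineMap.lineMap xs x t) :=
    (eq_iff_eq_of_sign_sub_eq (hsign y hy _ hz)).2 hty.symm
  have hdist : dist xs (AffineMap.lineMap xs x t) ≤ dist xs x := by
    rw [dist_comm, dist_lineMap_left, Real.norm_of_nonneg ht.1]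
    exact mul_le_of_le_one_left dist_nonneg ht.2
  calc dist xs y ≤ c * dist xs (AffineMap.lineMap xs x t) ^ ((1 : ℝ) / (1 + α)) :=
        hlevel y hy _ hz hfz
    _ ≤ c * dist xs x ^ ((1 : ℝ) / (1 + α)) := by gcongr

/-- Applying `dist_le_of_le` twice: once to bound `dist xs x` through `x` itself, once for `y`. -/
theorem dist_le_rpow_of_le (hreg : RegularLevelSets Xset f xs c α) (hXconv : Convex ℝ Xset)
    (hf : HasContinuousRanking Xset f) (hc : 0 < c) (hα : 0 ≤ α)
    {x y : Euc d} (hx : x ∈ Xset) (hy : y ∈ Xset) (hxy : f x ≤ f y)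
    {r : ℝ} (hr : 0 ≤ r) (hxr : dist xs x ≤ r) :
    dist xs y ≤ c ^ ((2 + α) / (1 + α)) * r ^ ((1 : ℝ) / (1 + α) ^ 2) := by
  have hα1 : 0 < 1 + α := by linarith
  set β : ℝ := 1 / (1 + α)
  have hx' : dist xs x ≤ c * r ^ β := calc
    dist xs x ≤ c * dist xs x ^ β := hreg.dist_le_of_le hXconv hf hc.le hα hx hx le_rfl
    _ ≤ c * r ^ β := by gcongr
  calc dist xs y ≤ c * dist xs x ^ β := hreg.dist_le_of_le hXconv hf hc.le hα hx hy hxy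
    _ ≤ c * (c * r ^ β) ^ β := by gcongr
    _ = c ^ (1 + β) * r ^ (β * β) := by
      rw [Real.mul_rpow hc.le (by positivity), ← Real.rpow_mul hr, Real.rpow_add hc,
        Real.rpow_one, mul_assoc]
    _ = c ^ ((2 + α) / (1 + α)) * r ^ ((1 : ℝ) / (1 + α) ^ 2) := by
      congr 2
      · simp only [β]; field_simp; ring
      · simp only [β]; field_simp

end RegularLevelSets

lemma unifOn_apply_le_one {E : Type*} [MeasureSpace E] (s t : Set E) : unifOn s t ≤ 1 := calc
  unifOn s t ≤ unifOn s univ := measure_mono (subset_univ t)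
  _ = (volume s)⁻¹ * volume s := by
    rw [unifOn, Measure.smul_apply, Measure.restrict_apply_univ, smul_eq_mul]
  _ ≤ 1 := ENNReal.inv_mul_le_one _

lemma unifOn_compl_eq_zero {E : Type*} [MeasureSpace E] {s A : Set E} (hs : MeasurableSet s)
    (hA : A ⊆ s) : unifOn A sᶜ = 0 := by
  rw [unifOn, Measure.smul_apply, Measure.restrict_apply hs.compl,
    Set.disjoint_iff_inter_eq_empty.1 (disjoint_compl_left.mono_right hA), measure_empty,
    smul_zero]

lemma trueLoss_le_one {d : ℕ} (Xset : Set (Euc d)) (f : Euc d → ℝ) (r : Euc d → Euc d → ℝ) :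
    trueLoss Xset f r ≤ 1 := by
  refine ENNReal.toReal_le_of_le_ofReal zero_le_one ?_
  rw [ENNReal.ofReal_one]
  calc _ ≤ ((unifOn Xset).prod (unifOn Xset)) (univ ×ˢ univ) := by
          rw [univ_prod_univ]; exact measure_mono (subset_univ _)
    _ ≤ 1 := by
      rw [Measure.prod_prod]
      exact mul_le_one' (unifOn_apply_le_one _ _) (unifOn_apply_le_one _ _)

lemma sInf_trueLoss_le_one {d : ℕ} (Xset : Set (Euc d)) (f : Euc d → ℝ)
    (R : Set (Euc d → Euc d → ℝ)) : sInf (trueLoss Xset f '' R) ≤ 1 := by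
  rcases (trueLoss Xset f '' R).eq_empty_or_nonempty with h | ⟨_, r, hr, rfl⟩
  · rw [h, Real.sInf_empty]; exact zero_le_one
  · exact csInf_le_of_le ⟨0, by rintro _ ⟨r', -, rfl⟩; exact ENNReal.toReal_nonneg⟩
      (mem_image_of_mem _ hr) (trueLoss_le_one Xset f r)

theorem le_unifOn_closedBall_inter {d : ℕ} {Xset : Set (Euc d)} (hXcomp : IsCompact Xset)
    (hXconv : Convex ℝ Xset) (hXvol : volume Xset ≠ 0) {xs : Euc d} (hxs : xs ∈ Xset)
    {τ : ℝ} (hτ0 : 0 ≤ τ) (hτ1 : τ ≤ 1) :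
    ENNReal.ofReal (τ ^ d) ≤
      unifOn Xset (Metric.closedBall xs (Metric.diam Xset * τ) ∩ Xset) := by
  have himage : AffineMap.homothety xs τ '' Xset ⊆
      Metric.closedBall xs (Metric.diam Xset * τ) ∩ Xset := by
    rintro _ ⟨z, hz, rfl⟩
    rw [AffineMap.homothety_eq_lineMap]
    refine ⟨?_, hXconv.lineMap_mem hxs hz ⟨hτ0, hτ1⟩⟩
    rw [Metric.mem_closedBall, dist_lineMap_left, Real.norm_of_nonneg hτ0, mul_comm]
    gcongr
    exact Metric.dist_le_diam_of_mem hXcomp.isBounded hxs hz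
  have hmeas : MeasurableSet (Metric.closedBall xs (Metric.diam Xset * τ) ∩ Xset) :=
    Metric.isClosed_closedBall.measurableSet.inter hXcomp.isClosed.measurableSet
  rw [unifOn, Measure.smul_apply, Measure.restrict_apply hmeas, inter_assoc, inter_self,
    smul_eq_mul, ← ENNReal.mul_le_iff_le_inv hXvol hXcomp.measure_lt_top.ne]
  calc volume Xset * ENNReal.ofReal (τ ^ d) = volume (AffineMap.homothety xs τ '' Xset) := by
        rw [Measure.addHaar_image_homothety, finrank_euclideanSpace_fin,
          abs_of_nonneg (by positivity), mul_comm]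
    _ ≤ _ := measure_mono himage

lemma mul_le_rpow_mul_rpow_inv {A L e : ℝ} (hA : 1 ≤ A) (hL : 0 ≤ L) (he : 1 ≤ e) :
    A * L ≤ (A * L ^ e⁻¹) ^ e := by
  rw [Real.mul_rpow (by linarith) (by positivity), Real.rpow_inv_rpow hL (by linarith)]
  gcongr
  exact Real.self_le_rpow_of_one_le hA he

/-- `(1 - a) ^ (n - 1) ≤ exp (-(n a - a))`, and `n a - a ≥ 2 log (2 / δ) - 1 ≥ log (1 / δ)`. -/
lemma one_sub_pow_le_of_two_mul_log_div_le {δ a : ℝ} {n : ℕ} (hδ : δ ∈ Ioo (0 : ℝ) 1)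
    (hn : 1 ≤ n) (ha : 2 * (Real.log (2 / δ) / n) ≤ a) (ha1 : a ≤ 1) :
    (1 - a) ^ (n - 1) ≤ δ := by
  obtain ⟨hδ0, hδ1⟩ := hδ
  set L := Real.log (2 / δ)
  have hL : L = Real.log 2 - Real.log δ := Real.log_div two_ne_zero hδ0.ne'
  have hlogδ : Real.log δ < 0 := Real.log_neg hδ0 hδ1
  have hlog2 := Real.log_two_gt_d9
  have hn0 : (0 : ℝ) < n := by exact_mod_cast hn
  have hLa : 2 * L ≤ a * n := by rwa [mul_div_assoc', div_le_iff₀ hn0] at ha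
  have hrate : -((n - 1 : ℕ) * a) ≤ Real.log δ := by
    rw [Nat.cast_sub hn, Nat.cast_one]
    nlinarith
  calc (1 - a) ^ (n - 1) ≤ Real.exp (-a) ^ (n - 1) :=
        pow_le_pow_left₀ (by linarith) (Real.one_sub_le_exp_neg a) _
    _ = Real.exp (-((n - 1 : ℕ) * a)) := by rw [← Real.exp_nat_mul, mul_neg]
    _ ≤ Real.exp (Real.log δ) := Real.exp_le_exp.2 hrate
    _ = δ := Real.exp_log hδ0

lemma bern_singleton_true (p : ℝ) : bern p {true} = ENNReal.ofReal p := by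
  simp [bern]

/-- On the event `{B = true} ∩ {V ∈ G}`, which has probability `p · P(V ∈ G)` by independence,
`Y` is drawn from `μ`. -/
theorem ofReal_mul_measure_le_measure_inter_of_explore {Ω β E : Type*} [MeasurableSpace Ω]
    [MeasurableSpace β] [MeasurableSpace E] [StandardBorelSpace E] [Nonempty E]
    {P : Measure Ω} [IsFiniteMeasure P] {V : Ω → β} {B : Ω → Bool} {Y : Ω → E}
    (hV : Measurable V) (hB : Measurable B) (hY : Measurable Y) {p : ℝ}
    (hBlaw : P.map B = bern p) (hindep : IndepFun B V P) {μ : Measure E}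
    (hexplore : ∀ᵐ ω ∂P, B ω = true →
      condDistrib Y (fun ω => (V ω, B ω)) P (V ω, B ω) = μ)
    {G : Set β} (hG : MeasurableSet G) {S : Set E} (hS : MeasurableSet S) :
    ENNReal.ofReal p * μ S * P (V ⁻¹' G) ≤ P (V ⁻¹' G ∩ Y ⁻¹' S) := by
  set W : Ω → β × Bool := fun ω => (V ω, B ω)
  have hW : Measurable W := hV.prodMk hB
  have hGtrue : MeasurableSet (G ×ˢ {true}) := hG.prod (measurableSet_singleton true)
  have hpre : W ⁻¹' (G ×ˢ {true}) = B ⁻¹' {true} ∩ V ⁻¹' G := by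
    ext ω; simp [W, and_comm]
  have hBtrue : P (B ⁻¹' {true}) = ENNReal.ofReal p := by
    rw [← Measure.map_apply hB (measurableSet_singleton true), hBlaw, bern_singleton_true]
  have hkernel :
      ∀ᵐ ω ∂P.restrict (W ⁻¹' (G ×ˢ {true})), condDistrib Y W P (W ω) S = μ S := by
    rw [ae_restrict_iff' (hW hGtrue)]
    filter_upwards [hexplore] with ω hω hmem
    rw [hω hmem.2]
  calc ENNReal.ofReal p * μ S * P (V ⁻¹' G)
      = ∫⁻ ω in W ⁻¹' (G ×ˢ {true}), μ S ∂P := by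
        rw [setLIntegral_const, hpre, hindep.measure_inter_preimage_eq_mul _ _
          (measurableSet_singleton true) hG, hBtrue]
        ring
    _ = ∫⁻ ω in W ⁻¹' (G ×ˢ {true}), condDistrib Y W P (W ω) S ∂P :=
        (lintegral_congr_ae hkernel).symm
    _ = P (W ⁻¹' (G ×ˢ {true}) ∩ Y ⁻¹' S) :=
        setLIntegral_preimage_condDistrib hW hY.aemeasurable hS hGtrue
    _ ≤ P (V ⁻¹' G ∩ Y ⁻¹' S) := by
        rw [hpre]
        exact measure_mono (inter_subset_inter_left _ inter_subset_right)

def maximizersWithin {Ω : Type*} {d n : ℕ} (f : Euc d → ℝ) (X : Fin n → Ω → Euc d)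
    (xs : Euc d) (r : ℝ) : Set Ω :=
  {ω | ∀ i : Fin n, (∀ j : Fin n, f (X j ω) ≤ f (X i ω)) → dist xs (X i ω) ≤ r}

/-- `X 0` is not counted: only the later points come with an exploration coin. -/
def avoidsUpTo {Ω : Type*} {d n : ℕ} (X : Fin n → Ω → Euc d) (S : Set (Euc d)) (t : ℕ) :
    Set Ω :=
  {ω | ∀ s : Fin n, 1 ≤ (s : ℕ) → (s : ℕ) ≤ t → X s ω ∉ S}

section avoidsUpTo

variable {Ω : Type*} {d n : ℕ} {X : Fin n → Ω → Euc d} {S : Set (Euc d)}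

lemma avoidsUpTo_zero : avoidsUpTo X S 0 = univ :=
  eq_univ_of_forall fun _ _ h1 h0 => absurd (h1.trans h0) (by norm_num)

lemma avoidsUpTo_eq_preimage {t : ℕ} (ht : t + 1 < n) :
    avoidsUpTo X S t = (fun ω (i : Fin (t + 1)) => X (Fin.castLE ht.le i) ω) ⁻¹'
      {v | ∀ i : Fin (t + 1), 1 ≤ (i : ℕ) → v i ∉ S} := by
  ext ω
  simp only [avoidsUpTo, mem_ofPred_eq, mem_preimage]
  constructor
  · exact fun h i hi => h _ hi (by simp; omega)
  · intro h s hs hst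
    exact h ⟨s, by omega⟩ hs

lemma avoidsUpTo_succ {t : ℕ} (ht : t + 1 < n) :
    avoidsUpTo X S (t + 1) = avoidsUpTo X S t \ X ⟨t + 1, ht⟩ ⁻¹' S := by
  ext ω
  simp only [avoidsUpTo, mem_sdiff, mem_ofPred_eq, mem_preimage]
  constructor
  · exact fun h => ⟨fun s hs hst => h s hs (by omega), h _ (by simp) le_rfl⟩
  · rintro ⟨h, hlast⟩ s hs hst
    rcases Nat.le_succ_iff.1 hst with hst | hst
    · exact h s hs hst
    · rwa [show s = ⟨t + 1, ht⟩ from Fin.ext hst]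

lemma measurableSet_avoidsUpTo [MeasurableSpace Ω] (hX : ∀ i, Measurable (X i))
    (hS : MeasurableSet S) (t : ℕ) : MeasurableSet (avoidsUpTo X S t) := by
  simp only [avoidsUpTo, ofPred_forall]
  exact .iInter fun s => .iInter fun _ => .iInter fun _ => hX s hS.compl

end avoidsUpTo

namespace IsAdaRankOptProcess

variable {d n : ℕ} {Ω : Type*} [MeasurableSpace Ω] {P : Measure Ω} {Xset : Set (Euc d)}
  {f : Euc d → ℝ} {p : ℝ} {R : ℕ → Set (Euc d → Euc d → ℝ)} {X : Fin n → Ω → Euc d}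

section Finite

variable [IsFiniteMeasure P]

theorem measurable (hproc : IsAdaRankOptProcess P Xset f p R n X) (i : Fin n) :
    Measurable (X i) := by
  obtain ⟨-, hX, -⟩ := hproc
  exact hX i

theorem ae_mem (hproc : IsAdaRankOptProcess P Xset f p R n X) (hXm : MeasurableSet Xset) :
    ∀ᵐ ω ∂P, ∀ i, X i ω ∈ Xset := by
  obtain ⟨B, hX, hB, hX0, hstep⟩ := hproc
  rw [ae_all_iff]
  rintro ⟨_ | t, hi⟩
  · change P (X _ ⁻¹' Xsetᶜ) = 0
    rw [← Measure.map_apply (hX _) hXm.compl, hX0 hi]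
    exact unifOn_compl_eq_zero hXm subset_rfl
  · obtain ⟨-, -, ihat, -, -, hκ⟩ := hstep t hi
    have hW : Measurable fun ω => ((fun i : Fin (t + 1) => X (Fin.castLE hi.le i) ω),
        B ⟨t + 1, hi⟩ ω) := (measurable_pi_lambda _ fun i => hX _).prodMk (hB _)
    change P (X _ ⁻¹' Xsetᶜ) = 0
    rw [← univ_inter (X _ ⁻¹' Xsetᶜ), ← preimage_univ,
      ← setLIntegral_preimage_condDistrib hW (hX _).aemeasurable hXm.compl MeasurableSet.univ,
      preimage_univ, Measure.restrict_univ]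
    refine lintegral_eq_zero_of_ae_eq_zero ?_
    filter_upwards [hκ] with ω hω
    rw [Pi.zero_apply, hω]
    split_ifs
    · exact unifOn_compl_eq_zero hXm subset_rfl
    · exact unifOn_compl_eq_zero hXm fun _ hy => hy.1

theorem measure_avoidsUpTo_succ_le (hproc : IsAdaRankOptProcess P Xset f p R n X)
    {S : Set (Euc d)} (hS : MeasurableSet S) {t : ℕ} (ht : t + 1 < n) :
    P (avoidsUpTo X S (t + 1)) ≤
      (1 - ENNReal.ofReal p * unifOn Xset S) * P (avoidsUpTo X S t) := by
  have hX := hproc.measurable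
  obtain ⟨B, -, hB, -, hstep⟩ := hproc
  obtain ⟨hBlaw, hindep, ihat, -, -, hκ⟩ := hstep t ht
  have hG :
      MeasurableSet {v : Fin (t + 1) → Euc d | ∀ i : Fin (t + 1), 1 ≤ (i : ℕ) → v i ∉ S} := by
    simp only [ofPred_forall]
    exact .iInter fun i => .iInter fun _ => hS.compl.preimage (measurable_pi_apply i)
  have hhit := ofReal_mul_measure_le_measure_inter_of_explore
    (measurable_pi_lambda _ fun i => hX _) (hB _) (hX _) hBlaw
    (hindep.comp measurable_id measurable_fst) (μ := unifOn Xset)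
    (by filter_upwards [hκ] with ω hω hBω; rw [hω, if_pos hBω]) hG hS
  rw [← avoidsUpTo_eq_preimage ht] at hhit
  rw [avoidsUpTo_succ ht, ENNReal.eq_sub_of_add_eq (measure_ne_top _ _)
    (measure_sdiff_add_inter _ (hX _ hS)), ENNReal.sub_mul fun _ _ => measure_ne_top _ _, one_mul]
  exact tsub_le_tsub_left hhit _

end Finite

variable [IsProbabilityMeasure P]

theorem measure_avoidsUpTo_le (hproc : IsAdaRankOptProcess P Xset f p R n X)
    {S : Set (Euc d)} (hS : MeasurableSet S) :
    ∀ t ≤ n - 1, P (avoidsUpTo X S t) ≤ (1 - ENNReal.ofReal p * unifOn Xset S) ^ t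
  | 0, _ => by rw [avoidsUpTo_zero, measure_univ, pow_zero]
  | t + 1, ht => by
    rw [pow_succ']
    exact (hproc.measure_avoidsUpTo_succ_le hS (by omega)).trans
      (by gcongr; exact hproc.measure_avoidsUpTo_le hS t (by omega))

theorem ae_dist_le (hproc : IsAdaRankOptProcess P Xset f p R n X) (hXcomp : IsCompact Xset)
    (hXconv : Convex ℝ Xset) (hf : HasContinuousRanking Xset f) {xs : Euc d} {c α : ℝ}
    (hc : 0 < c) (hα : 0 ≤ α) (hreg : RegularLevelSets Xset f xs c α) :
    ∀ᵐ ω ∂P, ∀ i, dist xs (X i ω) ≤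
      c ^ ((2 + α) / (1 + α)) * Metric.diam Xset ^ ((1 : ℝ) / (1 + α) ^ 2) := by
  filter_upwards [hproc.ae_mem hXcomp.isClosed.measurableSet] with ω hmem i
  exact hreg.dist_le_rpow_of_le hXconv hf hc hα (hmem i) (hmem i) le_rfl Metric.diam_nonneg
    (Metric.dist_le_diam_of_mem hXcomp.isBounded hreg.1 (hmem i))

theorem le_measure_maximizersWithin (hproc : IsAdaRankOptProcess P Xset f p R n X)
    (hXm : MeasurableSet Xset) (hXconv : Convex ℝ Xset) (hf : HasContinuousRanking Xset f)
    {xs : Euc d} {c α : ℝ} (hc : 0 < c) (hα : 0 ≤ α) (hreg : RegularLevelSets Xset f xs c α)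
    {ρ q : ℝ} (hρ : 0 ≤ ρ) (hp : 0 ≤ p) (hq : 0 ≤ q) (hpq : p * q ≤ 1)
    (hqS : ENNReal.ofReal q ≤ unifOn Xset (Metric.closedBall xs ρ ∩ Xset)) :
    ENNReal.ofReal (1 - (1 - p * q) ^ (n - 1)) ≤
      P (maximizersWithin f X xs (c ^ ((2 + α) / (1 + α)) * ρ ^ ((1 : ℝ) / (1 + α) ^ 2))) := by
  set S := Metric.closedBall xs ρ ∩ Xset
  have hS : MeasurableSet S := Metric.isClosed_closedBall.measurableSet.inter hXm
  have hhit : ∀ᵐ ω ∂P, ω ∈ (avoidsUpTo X S (n - 1))ᶜ →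
      ω ∈ maximizersWithin f X xs (c ^ ((2 + α) / (1 + α)) * ρ ^ ((1 : ℝ) / (1 + α) ^ 2)) := by
    filter_upwards [hproc.ae_mem hXm] with ω hmem hω i hi
    simp only [avoidsUpTo, mem_compl_iff, mem_ofPred_eq, not_forall, not_not] at hω
    obtain ⟨s, -, -, hsρ, -⟩ := hω
    exact hreg.dist_le_rpow_of_le hXconv hf hc hα (hmem s) (hmem i) (hi s) hρ
      (by rwa [dist_comm, ← Metric.mem_closedBall])
  calc ENNReal.ofReal (1 - (1 - p * q) ^ (n - 1))
      = 1 - (1 - ENNReal.ofReal p * ENNReal.ofReal q) ^ (n - 1) := by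
        rw [ENNReal.ofReal_sub _ (by bound), ENNReal.ofReal_pow (by linarith),
          ENNReal.ofReal_sub _ (by positivity), ENNReal.ofReal_mul hp, ENNReal.ofReal_one]
    _ ≤ 1 - (1 - ENNReal.ofReal p * unifOn Xset S) ^ (n - 1) := by gcongr
    _ ≤ 1 - P (avoidsUpTo X S (n - 1)) :=
        tsub_le_tsub_left (hproc.measure_avoidsUpTo_le hS _ le_rfl) 1
    _ = P (avoidsUpTo X S (n - 1))ᶜ :=
        (prob_compl_eq_one_sub (measurableSet_avoidsUpTo hproc.measurable hS _)).symm
    _ ≤ _ := measure_mono_ae hhit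

/-- The ball of radius `diam Xset * u ^ (1 + α) ^ 2` around `xs` has uniform mass at least
`u ^ (d (1 + α) ^ 2)`, and regularity turns that radius into
`diam Xset ^ (1 / (1 + α) ^ 2) * u`. -/
theorem le_measure_maximizersWithin_of_rate (hproc : IsAdaRankOptProcess P Xset f p R n X)
    (hXcomp : IsCompact Xset) (hXconv : Convex ℝ Xset) (hXint : (interior Xset).Nonempty)
    (hf : HasContinuousRanking Xset f) {xs : Euc d} {c α : ℝ} (hc : 0 < c) (hα : 0 ≤ α)
    (hreg : RegularLevelSets Xset f xs c α) (hp : p ∈ Icc (0 : ℝ) 1) (hn : 1 ≤ n)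
    {δ : ℝ} (hδ : δ ∈ Ioo (0 : ℝ) 1) {u : ℝ} (hu0 : 0 ≤ u) (hu1 : u ≤ 1)
    (hrate : 2 * (Real.log (2 / δ) / n) ≤ p * u ^ ((d : ℝ) * (1 + α) ^ 2)) :
    ENNReal.ofReal (1 - δ) ≤ P (maximizersWithin f X xs (c ^ ((2 + α) / (1 + α)) *
      Metric.diam Xset ^ ((1 : ℝ) / (1 + α) ^ 2) * u)) := by
  set τ := u ^ ((1 + α) ^ 2)
  have hτ0 : 0 ≤ τ := Real.rpow_nonneg hu0 _
  have hτ1 : τ ≤ 1 := Real.rpow_le_one hu0 hu1 (by positivity)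
  have hτd : τ ^ d = u ^ ((d : ℝ) * (1 + α) ^ 2) := by
    rw [← Real.rpow_natCast τ d, ← Real.rpow_mul hu0, mul_comm]
  have hρ : (Metric.diam Xset * τ) ^ ((1 : ℝ) / (1 + α) ^ 2) =
      Metric.diam Xset ^ ((1 : ℝ) / (1 + α) ^ 2) * u := by
    rw [Real.mul_rpow Metric.diam_nonneg hτ0, one_div, Real.rpow_rpow_inv hu0 (by positivity)]
  have hpτ : p * τ ^ d ≤ 1 := mul_le_one₀ hp.2 (pow_nonneg hτ0 d) (pow_le_one₀ hτ0 hτ1)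
  rw [mul_assoc, ← hρ]
  refine le_trans (ENNReal.ofReal_le_ofReal ?_) (hproc.le_measure_maximizersWithin
    hXcomp.isClosed.measurableSet hXconv hf hc hα hreg (mul_nonneg Metric.diam_nonneg hτ0)
    hp.1 (pow_nonneg hτ0 d) hpτ (le_unifOn_closedBall_inter hXcomp hXconv
      (Measure.measure_pos_of_nonempty_interior _ hXint).ne' hreg.1 hτ0 hτ1))
  linarith [one_sub_pow_le_of_two_mul_log_div_le hδ hn (hτd ▸ hrate) hpτ]

/-- If `u = A * (log (2 / δ) / n) ^ (1 / (d (1 + α) ^ 2)) ≥ 1`, the a priori bound `ae_dist_le`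
suffices; otherwise `p A ≥ 2` provides the rate. Since `1 / 0 = 0`, `u = A ≥ 1` when `d = 0`. -/
theorem le_measure_maximizersWithin_of_two_le_mul
    (hproc : IsAdaRankOptProcess P Xset f p R n X)
    (hXcomp : IsCompact Xset) (hXconv : Convex ℝ Xset) (hXint : (interior Xset).Nonempty)
    (hf : HasContinuousRanking Xset f) {xs : Euc d} {c α : ℝ} (hc : 0 < c) (hα : 0 ≤ α)
    (hreg : RegularLevelSets Xset f xs c α) (hp : p ∈ Icc (0 : ℝ) 1) (hn : 1 ≤ n)
    {δ : ℝ} (hδ : δ ∈ Ioo (0 : ℝ) 1) {A : ℝ} (hpA : 2 ≤ p * A) :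
    ENNReal.ofReal (1 - δ) ≤ P (maximizersWithin f X xs (c ^ ((2 + α) / (1 + α)) *
      Metric.diam Xset ^ ((1 : ℝ) / (1 + α) ^ 2) * A *
        (Real.log (2 / δ) / n) ^ ((1 : ℝ) / (d * (1 + α) ^ 2)))) := by
  set L := Real.log (2 / δ) / n
  have hA1 : 1 ≤ A := by nlinarith [hp.1, hp.2]
  have hL0 : 0 ≤ L :=
    div_nonneg (Real.log_nonneg (by rw [le_div_iff₀ hδ.1]; linarith [hδ.2])) n.cast_nonneg
  set u := A * L ^ ((1 : ℝ) / (d * (1 + α) ^ 2)) with hu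
  rw [mul_assoc _ A]
  rcases le_or_gt 1 u with hu1 | hu1
  · refine (ENNReal.ofReal_le_one.2 (by linarith [hδ.1])).trans ?_
    rw [← measure_univ (μ := P)]
    refine measure_mono_ae ?_
    filter_upwards [hproc.ae_dist_le hXcomp hXconv hf hc hα hreg] with ω hω _ i _
    exact (hω i).trans (le_mul_of_one_le_right (by positivity) hu1)
  have hd : d ≠ 0 := by
    rintro rfl
    simp only [hu, CharP.cast_eq_zero, zero_mul, div_zero, Real.rpow_zero, mul_one] at hu1
    linarith
  have he : 1 ≤ (d : ℝ) * (1 + α) ^ 2 :=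
    one_le_mul_of_one_le_of_one_le (Nat.one_le_cast.2 (Nat.pos_of_ne_zero hd))
      (one_le_pow₀ (by linarith))
  refine hproc.le_measure_maximizersWithin_of_rate hXcomp hXconv hXint hf hc hα hreg hp hn hδ
    (mul_nonneg (by linarith) (Real.rpow_nonneg hL0 _)) hu1.le ?_
  calc 2 * L ≤ p * (A * L) := by nlinarith
    _ ≤ p * u ^ ((d : ℝ) * (1 + α) ^ 2) := by
      rw [hu, one_div]
      exact mul_le_mul_of_nonneg_left (mul_le_rpow_mul_rpow_inv hA1 hL0 he) hp.1

end IsAdaRankOptProcess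

theorem adarankopt_upper_bound_general
    {d : ℕ} {Xset : Set (Euc d)} (hXcomp : IsCompact Xset) (hXconv : Convex ℝ Xset)
    (hXint : (interior Xset).Nonempty)
    {f : Euc d → ℝ} (hf : HasContinuousRanking Xset f)
    {xs : Euc d} {c α : ℝ} (hc : 0 < c) (hα : 0 ≤ α)
    (hreg : RegularLevelSets Xset f xs c α)
    {p : ℝ} (hp : p ∈ Set.Ioo (0 : ℝ) 1)
    {R : ℕ → Set (Euc d → Euc d → ℝ)}
    {kstar : ℕ}
    (hL : 0 < sInf (trueLoss Xset f '' R (kstar - 1)))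
    {K : ℝ} (hK : 0 < K)
    {Ω : Type*} [MeasurableSpace Ω] {P : Measure Ω} [IsProbabilityMeasure P]
    {n : ℕ} (hn : 1 ≤ n) {X : Fin n → Ω → Euc d}
    (hproc : IsAdaRankOptProcess P Xset f p R n X)
    {δ : ℝ} (hδ : δ ∈ Set.Ioo (0 : ℝ) 1) :
    ENNReal.ofReal (1 - δ) ≤
      P {ω | ∀ i : Fin n, (∀ j : Fin n, f (X j ω) ≤ f (X i ω)) →
        dist xs (X i ω) ≤
          c ^ ((2 + α) / (1 + α)) * Metric.diam Xset ^ ((1 : ℝ) / (1 + α) ^ 2) *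
            (11 * (K + Real.log (4 / δ)) /
              (p * (sInf (trueLoss Xset f '' R (kstar - 1))) ^ 2)) *
            (Real.log (2 / δ) / n) ^ ((1 : ℝ) / (d * (1 + α) ^ 2))} := by
  have hlog : 1 ≤ Real.log (4 / δ) := by
    rw [Real.le_log_iff_exp_le (div_pos four_pos hδ.1), le_div_iff₀ hδ.1]
    nlinarith [Real.exp_one_lt_d9, Real.exp_pos 1, hδ.2]
  have hE : sInf (trueLoss Xset f '' R (kstar - 1)) ^ 2 ≤ 1 :=
    pow_le_one₀ hL.le (sInf_trueLoss_le_one Xset f _)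
  refine hproc.le_measure_maximizersWithin_of_two_le_mul hXcomp hXconv hXint hf hc hα hreg
    (Ioo_subset_Icc_self hp) hn hδ ?_
  rw [mul_div_assoc', mul_div_mul_left _ _ hp.1.ne', le_div_iff₀ (by positivity)]
  nlinarith

/-- **Upper bound for AdaRankOpt** (Theorem 14 of the paper). -/
theorem adarankopt_upper_bound
    {d : ℕ} {Xset : Set (Euc d)} (hXcomp : IsCompact Xset) (hXconv : Convex ℝ Xset)
    (hXint : (interior Xset).Nonempty)
    {f : Euc d → ℝ} (hf : HasContinuousRanking Xset f)
    {xs : Euc d} {c α : ℝ} (hc : 0 < c) (hα : 0 ≤ α)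
    (hreg : RegularLevelSets Xset f xs c α)
    {p : ℝ} (hp : p ∈ Set.Ioo (0 : ℝ) 1)
    {R : ℕ → Set (Euc d → Euc d → ℝ)}
    (hRval : ∀ k, ∀ r ∈ R k, ∀ x x' : Euc d, r x x' = -1 ∨ r x x' = 0 ∨ r x x' = 1)
    (hRnested : ∀ k, R k ⊆ R (k + 1))
    {kstar : ℕ} (hkstar1 : 1 < kstar)
    (hkmem : (fun x x' : Euc d => Real.sign (f x - f x')) ∈ R kstar)
    (hkmin : ∀ k < kstar, (fun x x' : Euc d => Real.sign (f x - f x')) ∉ R k)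
    (hL : 0 < sInf (trueLoss Xset f '' R (kstar - 1)))
    {K : ℝ} (hK : 0 < K)
    (hrad : ∀ n : ℕ, 1 ≤ n → expRad Xset f (R (kstar - 1)) n ≤ Real.sqrt (K / n))
    {Ω : Type*} [MeasurableSpace Ω] {P : Measure Ω} [IsProbabilityMeasure P]
    {n : ℕ} (hn : 1 ≤ n) {X : Fin n → Ω → Euc d}
    (hproc : IsAdaRankOptProcess P Xset f p R n X)
    {δ : ℝ} (hδ : δ ∈ Set.Ioo (0 : ℝ) 1) :
    ENNReal.ofReal (1 - δ) ≤
      P {ω | ∀ i : Fin n, (∀ j : Fin n, f (X j ω) ≤ f (X i ω)) →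
        dist xs (X i ω) ≤
          c ^ ((2 + α) / (1 + α)) * Metric.diam Xset ^ ((1 : ℝ) / (1 + α) ^ 2) *
            (11 * (K + Real.log (4 / δ)) /
              (p * (sInf (trueLoss Xset f '' R (kstar - 1))) ^ 2)) *
            (Real.log (2 / δ) / n) ^ ((1 : ℝ) / (d * (1 + α) ^ 2))} :=
  adarankopt_upper_bound_general hXcomp hXconv hXint hf hc hα hreg hp hL hK hn hproc hδ
end

section
/- Let X ⊂ ℝ^d be a compact convex set with nonempty interior, let f : X → ℝ have a continuous induced ranking rule, and let (X_1, …, X_n) be a RankOpt-type process for f on X. Then for every y ∈ ℝ, P(max_{1≤i≤n} f(X_i) ≥ y) ≥ P(max_{1≤i≤n} f(X'_i) ≥ y), where X'_1, …, X'_n are independent random variables uniformly distributed on X. -/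
open MeasureTheory ProbabilityTheory Set
open scoped ENNReal NNReal BigOperators

/-!
Let `S = {x ∈ X | y ≤ f x}` and `r = P(X'₁ ∉ S)`, so the uniform search misses `S` with
probability exactly `rⁿ`. As long as the RankOpt-type process has not hit `S`, all its
values are `< y`, so its next sampling region contains `S`; a uniform law on a smaller set
containing `S` misses `S` with probability at most `r`. Conditioning step by step, the
process misses `S` with probability at most `rⁿ`. The continuous ranking rule makes `S`
measurable: it is the trace on `X` of the preimage of an upper set under a function
continuous on `X`.
-/

def upperLevelSet {α : Type*} (s : Set α) (f : α → ℝ) (y : ℝ) : Set α :=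
  {x ∈ s | y ≤ f x}

lemma Real.nonneg_iff_sign_ne_neg_one (r : ℝ) : 0 ≤ r ↔ Real.sign r ≠ -1 := by
  rcases lt_or_ge r 0 with hr | hr
  · simp [hr, Real.sign_of_neg hr]
  · refine ⟨fun _ h => ?_, fun _ => hr⟩
    rcases hr.eq_or_lt with rfl | hr
    · norm_num [Real.sign_zero] at h
    · norm_num [Real.sign_of_pos hr] at h

lemma measurableSet_upperLevelSet_of_continuousOn_of_le_iff {E : Type*} [TopologicalSpace E]
    [MeasurableSpace E] [OpensMeasurableSpace E] {s : Set E} (hs : MeasurableSet s)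
    {f g : E → ℝ} (hg : ContinuousOn g s) (hfg : ∀ x ∈ s, ∀ x' ∈ s, f x ≤ f x' ↔ g x ≤ g x')
    (y : ℝ) : MeasurableSet (upperLevelSet s f y) := by
  classical
  set T : Set ℝ := ↑(upperClosure (g '' upperLevelSet s f y))
  have hT : MeasurableSet T := (upperClosure _).upper.ordConnected.measurableSet
  have hg' : Measurable (s.piecewise g 0) := hg.measurable_piecewise continuousOn_const hs
  suffices upperLevelSet s f y = s ∩ s.piecewise g 0 ⁻¹' T from this ▸ hs.inter (hg' hT)
  ext x
  simp only [upperLevelSet, mem_ofPred_eq, mem_inter_iff, mem_preimage, T, SetLike.mem_coe,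
    mem_upperClosure, mem_image]
  constructor
  · rintro ⟨hx, hy⟩
    exact ⟨hx, g x, ⟨x, ⟨hx, hy⟩, rfl⟩, by simp [hx]⟩
  · rintro ⟨hx, _, ⟨x', ⟨hx', hy⟩, rfl⟩, hle⟩
    rw [piecewise_eq_of_mem _ _ _ hx] at hle
    exact ⟨hx, hy.trans ((hfg x' hx' x hx).2 hle)⟩

lemma HasContinuousRanking.measurableSet_upperLevelSet {d : ℕ} {Xset : Set (Euc d)}
    {f : Euc d → ℝ} (hf : HasContinuousRanking Xset f) (hX : MeasurableSet Xset) (y : ℝ) :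
    MeasurableSet (upperLevelSet Xset f y) := by
  obtain ⟨g, hg, hsign⟩ := hf
  refine measurableSet_upperLevelSet_of_continuousOn_of_le_iff hX hg (fun x hx x' hx' => ?_) y
  rw [← sub_nonneg, ← sub_nonneg (a := g x'), Real.nonneg_iff_sign_ne_neg_one,
    Real.nonneg_iff_sign_ne_neg_one, hsign x' hx' x hx]

section Uniform

variable {E : Type*} [MeasureSpace E]

lemma ae_unifOn_mem {s : Set E} (hs : MeasurableSet s) : ∀ᵐ x ∂unifOn s, x ∈ s :=
  Measure.ae_smul_measure (ae_restrict_mem hs) _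

lemma unifOn_le_unifOn_of_subset {s A S : Set E} (hS : MeasurableSet S) (hSA : S ⊆ A)
    (hAs : A ⊆ s) : unifOn s S ≤ unifOn A S := by
  simp only [unifOn, Measure.smul_apply, Measure.restrict_apply hS, smul_eq_mul,
    inter_eq_self_of_subset_left hSA, inter_eq_self_of_subset_left (hSA.trans hAs)]
  gcongr

lemma unifOn_compl_le_of_subset {s A S : Set E} [IsProbabilityMeasure (unifOn s)]
    [IsProbabilityMeasure (unifOn A)] (hS : MeasurableSet S) (hSA : S ⊆ A) (hAs : A ⊆ s) :
    unifOn A Sᶜ ≤ unifOn s Sᶜ := by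
  rw [prob_compl_eq_one_sub hS, prob_compl_eq_one_sub hS]
  exact tsub_le_tsub_left (unifOn_le_unifOn_of_subset hS hSA hAs) 1

end Uniform

lemma measure_pi_exists_mem {ι α : Type*} [Fintype ι] [MeasurableSpace α] {μ : Measure α}
    [IsProbabilityMeasure μ] {S : Set α} (hS : MeasurableSet S) :
    Measure.pi (fun _ : ι => μ) {x | ∃ i, x i ∈ S} = 1 - μ Sᶜ ^ Fintype.card ι := by
  have : {x : ι → α | ∃ i, x i ∈ S} = (univ.pi fun _ => Sᶜ)ᶜ := by ext; simp
  rw [this, prob_compl_eq_one_sub (MeasurableSet.univ_pi fun _ => hS.compl), Measure.pi_pi,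
    Finset.prod_const, Finset.card_univ]

lemma measure_preimage_inter_le_of_condDistrib {α β Ω : Type*} [MeasurableSpace Ω]
    [StandardBorelSpace Ω] [Nonempty Ω] {mα : MeasurableSpace α} {mβ : MeasurableSpace β}
    {μ : Measure α} [IsFiniteMeasure μ] {X : α → β} {Y : α → Ω} (hX : Measurable X)
    (hY : AEMeasurable Y μ) {s : Set Ω} {t : Set β} (hs : MeasurableSet s)
    (ht : MeasurableSet t) {r : ℝ≥0∞} (h : ∀ᵐ a ∂μ, X a ∈ t → condDistrib Y X μ (X a) s ≤ r) :
    μ (X ⁻¹' t ∩ Y ⁻¹' s) ≤ r * μ (X ⁻¹' t) := by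
  rw [← setLIntegral_preimage_condDistrib hX hY hs ht, ← setLIntegral_const]
  exact setLIntegral_mono_ae measurable_const.aemeasurable h

namespace IsRankOptProcess

variable {d : ℕ} {Xset : Set (Euc d)} {f : Euc d → ℝ} {Ω : Type*} [MeasurableSpace Ω]
  {P : Measure Ω} [IsProbabilityMeasure P] {n : ℕ} {X : Fin n → Ω → Euc d}

lemma isProbabilityMeasure_unifOn (hproc : IsRankOptProcess P Xset f n X) (hn : 0 < n) :
    IsProbabilityMeasure (unifOn Xset) :=
  hproc.2.1 hn ▸ Measure.isProbabilityMeasure_map (hproc.1 _).aemeasurable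

lemma ae_mem (hproc : IsRankOptProcess P Xset f n X) (hX : MeasurableSet Xset) (i : Fin n) :
    ∀ᵐ ω ∂P, X i ω ∈ Xset := by
  obtain ⟨hXmeas, hX0, hcond⟩ := hproc
  rw [ae_iff]
  change P (X i ⁻¹' Xsetᶜ) = 0
  obtain ⟨_ | t, ht⟩ := i
  · rw [← Measure.map_apply (hXmeas _) hX.compl, hX0 ht]
    exact ae_unifOn_mem hX
  · refine le_zero_iff.1 ?_
    have h := measure_preimage_inter_le_of_condDistrib
      (measurable_pi_lambda (fun ω (i : Fin (t + 1)) => X (Fin.castLE ht.le i) ω)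
        fun _ => hXmeas _)
      (hXmeas ⟨t + 1, ht⟩).aemeasurable hX.compl MeasurableSet.univ (μ := P) (r := 0) ?_
    · simpa using h
    filter_upwards [hcond t ht] with ω hω _
    obtain ⟨A, hA, -, -, hAX, hκ⟩ := hω
    rw [hκ]
    exact (measure_mono (compl_subset_compl.2 hAX)).trans (ae_unifOn_mem hA).le

lemma ae_condDistrib_compl_le (hproc : IsRankOptProcess P Xset f n X)
    (hX : MeasurableSet Xset) {y : ℝ} (hS : MeasurableSet (upperLevelSet Xset f y)) {t : ℕ}
    (ht : t + 1 < n) :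
    ∀ᵐ ω ∂P, (∀ i : Fin (t + 1), X (Fin.castLE ht.le i) ω ∉ upperLevelSet Xset f y) →
      condDistrib (X ⟨t + 1, ht⟩) (fun ω' i => X (Fin.castLE ht.le i) ω') P
          (fun i => X (Fin.castLE ht.le i) ω) (upperLevelSet Xset f y)ᶜ
        ≤ unifOn Xset (upperLevelSet Xset f y)ᶜ := by
  have := hproc.isProbabilityMeasure_unifOn (by omega)
  filter_upwards [hproc.2.2 t ht, ae_all_iff.2 (hproc.ae_mem hX)] with ω hA hmem hmiss
  obtain ⟨A, -, -, hlevel, hAX, hκ⟩ := hA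
  rw [hκ]
  have : IsProbabilityMeasure (unifOn A) := hκ ▸ inferInstance
  refine unifOn_compl_le_of_subset hS (fun x hx => hlevel ⟨hx.1, fun i => ?_⟩) hAX
  exact (not_le.1 fun hy => hmiss i ⟨hmem _, hy⟩).le.trans hx.2

lemma measure_forall_lt_notMem_succ_le (hproc : IsRankOptProcess P Xset f n X)
    (hX : MeasurableSet Xset) {y : ℝ} (hS : MeasurableSet (upperLevelSet Xset f y)) {t : ℕ}
    (ht : t + 1 ≤ n) :
    P {ω | ∀ i : Fin n, (i : ℕ) < t + 1 → X i ω ∉ upperLevelSet Xset f y}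
      ≤ unifOn Xset (upperLevelSet Xset f y)ᶜ *
        P {ω | ∀ i : Fin n, (i : ℕ) < t → X i ω ∉ upperLevelSet Xset f y} := by
  set S := upperLevelSet Xset f y
  rcases t with _ | t
  · have h0 : {ω | ∀ i : Fin n, (i : ℕ) < 0 + 1 → X i ω ∉ S} = X ⟨0, ht⟩ ⁻¹' Sᶜ := by
      ext ω
      refine ⟨fun h => h _ Nat.one_pos, fun h i hi => ?_⟩
      rwa [show i = ⟨0, ht⟩ from Fin.ext (Nat.lt_one_iff.1 hi)]
    rw [h0, ← Measure.map_apply (hproc.1 _) hS.compl, hproc.2.1 ht]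
    simp
  have ht' : t + 1 < n := ht
  set H : Ω → Fin (t + 1) → Euc d := fun ω i => X (Fin.castLE ht'.le i) ω
  have hH : {ω | ∀ i : Fin n, (i : ℕ) < t + 1 → X i ω ∉ S} = H ⁻¹' univ.pi fun _ => Sᶜ := by
    ext ω
    simp only [mem_ofPred_eq, mem_preimage, Set.mem_pi, mem_univ, mem_compl_iff, true_imp_iff,
      H]
    exact ⟨fun h i => h _ i.2, fun h i hi => h ⟨i, hi⟩⟩
  have hsucc : {ω | ∀ i : Fin n, (i : ℕ) < t + 1 + 1 → X i ω ∉ S}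
      = H ⁻¹' (univ.pi fun _ => Sᶜ) ∩ X ⟨t + 1, ht'⟩ ⁻¹' Sᶜ := by
    rw [← hH]
    ext ω
    simp only [mem_ofPred_eq, mem_inter_iff, mem_preimage, mem_compl_iff]
    refine ⟨fun h => ⟨fun i hi => h i (by omega), h _ (Nat.lt_succ_self _)⟩, ?_⟩
    rintro ⟨h, hlast⟩ i hi
    rcases Nat.lt_succ_iff_lt_or_eq.1 hi with hi | hi
    · exact h i hi
    · rwa [show i = ⟨t + 1, ht'⟩ from Fin.ext hi]
  rw [hsucc, hH]
  refine measure_preimage_inter_le_of_condDistrib (measurable_pi_lambda _ fun _ => hproc.1 _)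
    (hproc.1 _).aemeasurable hS.compl (MeasurableSet.univ_pi fun _ => hS.compl) ?_
  exact (hproc.ae_condDistrib_compl_le hX hS ht').mono fun ω h hmiss =>
    h fun i => hmiss i (mem_univ _)

lemma measure_forall_notMem_le_pow (hproc : IsRankOptProcess P Xset f n X)
    (hX : MeasurableSet Xset) {y : ℝ} (hS : MeasurableSet (upperLevelSet Xset f y)) :
    P {ω | ∀ i, X i ω ∉ upperLevelSet Xset f y} ≤ unifOn Xset (upperLevelSet Xset f y)ᶜ ^ n := by
  suffices ∀ t ≤ n, P {ω | ∀ i : Fin n, (i : ℕ) < t → X i ω ∉ upperLevelSet Xset f y}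
      ≤ unifOn Xset (upperLevelSet Xset f y)ᶜ ^ t by
    simpa using this n le_rfl
  intro t ht
  induction t with
  | zero => simp
  | succ t ih =>
    rw [pow_succ']
    exact (hproc.measure_forall_lt_notMem_succ_le hX hS ht).trans (by gcongr; exact ih (by omega))

end IsRankOptProcess

theorem rankopt_dominates_uniform_general
    {d : ℕ} {Xset : Set (Euc d)} (hXcomp : IsCompact Xset)
    {f : Euc d → ℝ} (hf : HasContinuousRanking Xset f)
    {Ω : Type*} [MeasurableSpace Ω] {P : Measure Ω} [IsProbabilityMeasure P]
    {n : ℕ} {X : Fin n → Ω → Euc d} (hproc : IsRankOptProcess P Xset f n X)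
    (y : ℝ) :
    (Measure.pi fun _ : Fin n => unifOn Xset) {x | ∃ i : Fin n, y ≤ f (x i)}
      ≤ P {ω | ∃ i : Fin n, y ≤ f (X i ω)} := by
  rcases n.eq_zero_or_pos with rfl | hn
  · simp
  have hX : MeasurableSet Xset := hXcomp.isClosed.measurableSet
  set S := upperLevelSet Xset f y
  have hS : MeasurableSet S := hf.measurableSet_upperLevelSet hX y
  have := hproc.isProbabilityMeasure_unifOn hn
  have hsample : ∀ᵐ x ∂Measure.pi fun _ : Fin n => unifOn Xset, ∀ i, x i ∈ Xset :=
    ae_all_iff.2 fun _ => Measure.tendsto_eval_ae_ae.eventually (ae_unifOn_mem hX)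
  calc (Measure.pi fun _ : Fin n => unifOn Xset) {x | ∃ i : Fin n, y ≤ f (x i)}
      ≤ (Measure.pi fun _ : Fin n => unifOn Xset) {x | ∃ i, x i ∈ S} :=
        measure_mono_ae <| hsample.mono fun _ hx ⟨i, hi⟩ => ⟨i, hx i, hi⟩
    _ = 1 - unifOn Xset Sᶜ ^ n := by rw [measure_pi_exists_mem hS, Fintype.card_fin]
    _ ≤ 1 - P {ω | ∀ i, X i ω ∉ S} :=
        tsub_le_tsub_left (hproc.measure_forall_notMem_le_pow hX hS) 1
    _ = P {ω | ∃ i, X i ω ∈ S} := by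
        rw [← prob_compl_eq_one_sub (s := {ω | ∀ i, X i ω ∉ S})
          (by rw [ofPred_forall]; exact .iInter fun i => hproc.1 i hS.compl)]
        congr 1
        ext
        simp
    _ ≤ P {ω | ∃ i : Fin n, y ≤ f (X i ω)} := measure_mono fun _ ⟨i, hi⟩ => ⟨i, hi.2⟩

/-- **Proposition 6 of the paper**: a RankOpt-type process stochastically dominates a pure
random search, i.e. `P(max_i f(X_i) ≥ y) ≥ P(max_i f(X'_i) ≥ y)` for `X'_i` i.i.d. uniform
on `X`. -/
theorem rankopt_dominates_uniform
    {d : ℕ} {Xset : Set (Euc d)} (hXcomp : IsCompact Xset) (hXconv : Convex ℝ Xset)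
    (hXint : (interior Xset).Nonempty)
    {f : Euc d → ℝ} (hf : HasContinuousRanking Xset f)
    {Ω : Type*} [MeasurableSpace Ω] {P : Measure Ω} [IsProbabilityMeasure P]
    {n : ℕ} {X : Fin n → Ω → Euc d} (hproc : IsRankOptProcess P Xset f n X)
    (y : ℝ) :
    (Measure.pi fun _ : Fin n => unifOn Xset) {x | ∃ i : Fin n, y ≤ f (x i)}
      ≤ P {ω | ∃ i : Fin n, y ≤ f (X i ω)} :=
  rankopt_dominates_uniform_general hXcomp hf hproc y
end
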